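/- Let reg be a regular expression over a finite base alphabet Σ̃ and let M(callseq reg) be the VPA compiled from the linear sequence policy callseq reg. If a rooted well-matched nested word n satisfies n ∈ ⟦callseq reg⟧_Seq, then n is accepted by M(callseq reg); that is, ⟦callseq reg⟧_Seq restricted to rooted well-matched nested words is contained in L(M(callseq reg)). -/

import Mathlib

open Classical

namespace SafeTree

/-- Call and return symbols over a base alphabet `A`:
`Sym.call a` is `⟨a` and `Sym.ret a` is `a⟩`. -/
inductive Sym (A : Type) : Type
  | call : A → Sym A
  | ret : A → Sym A
  deriving DecidableEq

/-- Well-matched words over call/return symbols: every call is matched with a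
later return and matched pairs do not cross (the Dyck condition). -/
inductive WellMatched {A : Type} : List (Sym A) → Prop
  | nil : WellMatched []
  | wrap {w : List (Sym A)} (a b : A) :
      WellMatched w → WellMatched (Sym.call a :: (w ++ [Sym.ret b]))
  | append {w₁ w₂ : List (Sym A)} :
      WellMatched w₁ → WellMatched w₂ → WellMatched (w₁ ++ w₂)

/-- A rooted well-matched nested word: a well-matched word whose first and last
positions are matched with each other. -/
def Rooted {A : Type} (n : List (Sym A)) : Prop :=
  ∃ (a b : A) (w : List (Sym A)), WellMatched w ∧ n = Sym.call a :: (w ++ [Sym.ret b])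

/-- Position `i` (0-indexed) of `n` holds a call symbol. -/
def IsCallAt {A : Type} (n : List (Sym A)) (i : ℕ) : Prop :=
  ∃ a, n[i]? = some (Sym.call a)

/-- Position `j` (0-indexed) of `n` holds a return symbol. -/
def IsRetAt {A : Type} (n : List (Sym A)) (j : ℕ) : Prop :=
  ∃ a, n[j]? = some (Sym.ret a)

/-- The matching relation of a nested word, on 0-indexed positions: call
position `i` is matched with return position `j`. -/
def MatchedAt {A : Type} (n : List (Sym A)) (i j : ℕ) : Prop :=
  i < j ∧ j < n.length ∧ IsCallAt n i ∧ IsRetAt n j ∧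
    WellMatched ((n.drop (i+1)).take (j - (i+1)))

/-- The word of base symbols of the call positions, read left to right. -/
def callsOf {A : Type} : List (Sym A) → List A
  | [] => []
  | Sym.call a :: w => a :: callsOf w
  | Sym.ret _ :: w => callsOf w

/-- A deterministic visibly pushdown automaton over base alphabet `A`
(call symbols `⟨a` and return symbols `a⟩` for `a : A`), states `Q`,
and stack alphabet `Γ` with distinguished bottom symbol `bot`. -/
structure VPA (A : Type) (Q : Type) (Γ : Type) where
  qinit : Q
  final : Set Q
  bot : Γ
  callStep : Q → A → Q × Γ
  retStep : Q → Γ → A → Q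

namespace VPA

variable {A Q Γ : Type}

/-- One step of a VPA on a call or a return symbol.  The stack is represented
as a list with its top at the head; the empty list represents the stack
containing only the bottom symbol `⊥`, which is never pushed nor removed. -/
def step (M : VPA A Q Γ) : Q × List Γ → Sym A → Q × List Γ
  | (q, θ), Sym.call a => ((M.callStep q a).1, (M.callStep q a).2 :: θ)
  | (q, []), Sym.ret a => (M.retStep q M.bot a, [])
  | (q, s :: θ), Sym.ret a => (M.retStep q s a, θ)

/-- The configuration reached by running `M` on `w` from configuration `c`. -/
def run (M : VPA A Q Γ) (c : Q × List Γ) (w : List (Sym A)) : Q × List Γ :=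
  w.foldl M.step c

/-- `M` accepts `w` if the run from the initial configuration `(q_init, ⊥)`
ends in a final state. -/
def Accepts (M : VPA A Q Γ) (w : List (Sym A)) : Prop :=
  (M.run (M.qinit, []) w).1 ∈ M.final

end VPA

/-- A universal state space hosting all the compiled automata: distinguished
control states, states of the DFAs of the regular expressions (`dfa`, `dfa2`),
augmented copies (`aug`), and states of recursively compiled sub-automata
(`sub i s` is state `s` of the `i`-th sub-automaton). -/
inductive St (σ : Type) : Type
  | beg | fin | sat | rej | exist
  | dfa (q : σ)
  | dfa2 (q : σ)
  | aug (q : σ)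
  | sub (i : ℕ) (s : St σ)
  deriving DecidableEq

/-- The VPA `M(callseq reg)` compiled from the linear sequence policy
`callseq reg`, given a DFA `d` for `reg`: it simulates `d` on call symbols
(pushing the current state), ignores return symbols (keeping the current
state), and accepts, on the matched return of the first symbol (recognized by
the stack symbol `q_beg`), iff the DFA is in an accepting state; all missing
transitions are sent to the sink reject state. -/
noncomputable def compileLin {A σ : Type} (d : DFA A σ) :
    VPA A (St σ) (Option (St σ)) where
  qinit := .beg
  final := {St.fin}
  bot := none
  callStep := fun q s =>
    match q with
    | .beg => (.dfa (d.step d.start s), some .beg)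
    | .dfa q₁ => (.dfa (d.step q₁ s), some (.dfa q₁))
    | _ => (.rej, some .rej)
  retStep := fun q γ _s =>
    match q, γ with
    | .dfa q₁, some .beg => if q₁ ∈ d.accept then .fin else .rej
    | .dfa q₁, some (.dfa _) => .dfa q₁
    | _, _ => .rej

lemma callsOf_append {A : Type} (w₁ w₂ : List (Sym A)) :
    callsOf (w₁ ++ w₂) = callsOf w₁ ++ callsOf w₂ := by
  induction w₁ with
  | nil => rfl
  | cons x w ih => cases x <;> simp [callsOf, ih]

lemma run_wm {A σ : Type} (d : DFA A σ) {w : List (Sym A)} (hw : WellMatched w) :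
    ∀ (q : σ) (θ : List (Option (St σ))),
      (compileLin d).run (.dfa q, θ) w = (.dfa (d.evalFrom q (callsOf w)), θ) := by
  induction hw with
  | nil => intro q θ; rfl
  | wrap a b _ ih =>
      intro q θ
      simp only [VPA.run, List.foldl_cons, List.foldl_append] at *
      have h1 : (compileLin d).step (.dfa q, θ) (Sym.call a)
          = (.dfa (d.step q a), some (.dfa q) :: θ) := by simp [VPA.step, compileLin]
      rw [h1, ih]
      simp [VPA.step, callsOf, callsOf_append, compileLin, DFA.evalFrom]
  | append _ _ ih₁ ih₂ =>
      intro q θ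
      simp only [VPA.run, List.foldl_append] at *
      rw [ih₁, ih₂, callsOf_append]
      simp [DFA.evalFrom, List.foldl_append]

/-- If a rooted well-matched nested word `n` satisfies
`n ∈ ⟦callseq reg⟧_Seq`, then `n` is accepted by the VPA compiled from the
linear sequence policy `callseq reg`. -/
theorem stmt2 {A σ : Type} [Fintype A] [Fintype σ]
    (reg : RegularExpression A) (d : DFA A σ)
    (hd : d.accepts = reg.matches')
    (n : List (Sym A)) (hn : Rooted n)
    (hsem : callsOf n ∈ reg.matches') :
    (compileLin d).Accepts n := by
  obtain ⟨a, b, w, hw, rfl⟩ := hn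
  unfold VPA.Accepts
  simp only [VPA.run, List.foldl_cons, List.foldl_append]
  have h1 : (compileLin d).step ((compileLin d).qinit, []) (Sym.call a)
      = (.dfa (d.step d.start a), [some .beg]) := by simp [VPA.step, compileLin]
  rw [h1]
  have h2 := run_wm d hw (d.step d.start a) [some .beg]
  simp only [VPA.run] at h2
  rw [h2]
  have hacc : d.evalFrom (d.step d.start a) (callsOf w) ∈ d.accept := by
    have : callsOf (Sym.call a :: (w ++ [Sym.ret b])) ∈ d.accepts := by
      rw [hd]; exact hsem
    simp [callsOf, callsOf_append, DFA.accepts, DFA.acceptsFrom, DFA.eval,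
      DFA.evalFrom, Set.mem_setOf_eq] at this
    exact this
  simp [VPA.step, compileLin, hacc]

end SafeTree
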